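/- For every x ∈ ℝ and every k ∈ ℕ, the following two inequalities hold: ∫_0^1 ( I₀⁽ᵏ⁾(y·x) / I₀(x) )² dy ≤ 1, and |x| · ∫_0^1 ( I₀⁽ᵏ⁾(y·x) / I₀(x) )² dy ≤ 3. -/

import Mathlib

open Real MeasureTheory

/-- `I₀(x) = (1/π) ∫_0^π exp(x cos θ) dθ`. -/
noncomputable def I0 (x : ℝ) : ℝ := (1 / π) * ∫ θ in (0:ℝ)..π, Real.exp (x * Real.cos θ)

/-- `I₀⁽ᵏ⁾(x) = (1/π) ∫_0^π exp(x cos θ) (cos θ)^k dθ`. -/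
noncomputable def I0k (k : ℕ) (x : ℝ) : ℝ :=
  (1 / π) * ∫ θ in (0:ℝ)..π, Real.exp (x * Real.cos θ) * Real.cos θ ^ k

lemma intInt (z : ℝ) (k : ℕ) (a b : ℝ) :
    IntervalIntegrable (fun θ => Real.exp (z * Real.cos θ) * Real.cos θ ^ k) volume a b :=
  (by fun_prop : Continuous fun θ : ℝ => Real.exp (z * Real.cos θ) * Real.cos θ ^ k).intervalIntegrable a b

lemma intInt0 (z : ℝ) (a b : ℝ) :
    IntervalIntegrable (fun θ => Real.exp (z * Real.cos θ)) volume a b :=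
  (by fun_prop : Continuous fun θ : ℝ => Real.exp (z * Real.cos θ)).intervalIntegrable a b

lemma one_le_I0 (x : ℝ) : 1 ≤ I0 x := by
  have h1 : (∫ θ in (0:ℝ)..π, (1 + x * Real.cos θ)) = π := by
    rw [intervalIntegral.integral_add intervalIntegrable_const
      ((by fun_prop : Continuous fun θ : ℝ => x * Real.cos θ).intervalIntegrable _ _)]
    simp [intervalIntegral.integral_const_mul, integral_cos]
  have h2 : (∫ θ in (0:ℝ)..π, (1 + x * Real.cos θ)) ≤ ∫ θ in (0:ℝ)..π, Real.exp (x * Real.cos θ) := by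
    apply intervalIntegral.integral_mono_on Real.pi_pos.le
      (intervalIntegrable_const.add ((by fun_prop : Continuous fun θ : ℝ => x * Real.cos θ).intervalIntegrable _ _))
      (intInt0 x 0 π)
    intro θ _
    have := Real.add_one_le_exp (x * Real.cos θ)
    linarith
  rw [h1] at h2
  have hπ := Real.pi_pos
  rw [I0]
  calc (1:ℝ) = (1/π) * π := by field_simp
    _ ≤ (1/π) * ∫ θ in (0:ℝ)..π, Real.exp (x * Real.cos θ) :=
        mul_le_mul_of_nonneg_left h2 (by positivity)

lemma I0_pos (x : ℝ) : 0 < I0 x := lt_of_lt_of_le one_pos (one_le_I0 x)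

lemma abs_I0k_le (k : ℕ) (z : ℝ) : |I0k k z| ≤ I0 z := by
  have hπ := Real.pi_pos
  rw [I0k, I0, abs_mul, abs_of_pos (by positivity : (0:ℝ) < 1 / π)]
  have h1 : |∫ θ in (0:ℝ)..π, Real.exp (z * Real.cos θ) * Real.cos θ ^ k|
      ≤ ∫ θ in (0:ℝ)..π, |Real.exp (z * Real.cos θ) * Real.cos θ ^ k| :=
    intervalIntegral.abs_integral_le_integral_abs hπ.le
  have h2 : (∫ θ in (0:ℝ)..π, |Real.exp (z * Real.cos θ) * Real.cos θ ^ k|)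
      ≤ ∫ θ in (0:ℝ)..π, Real.exp (z * Real.cos θ) := by
    apply intervalIntegral.integral_mono_on hπ.le ((intInt z k 0 π).abs) (intInt0 z 0 π)
    intro θ _
    rw [abs_mul, abs_of_pos (Real.exp_pos _)]
    have hc : |Real.cos θ ^ k| ≤ 1 := by
      rw [abs_pow]
      exact pow_le_one₀ (abs_nonneg _) (Real.abs_cos_le_one θ)
    nlinarith [Real.exp_pos (z * Real.cos θ), abs_nonneg (Real.cos θ ^ k)]
  have := h1.trans h2
  have h3 : (0:ℝ) < 1 / π := by positivity
  exact mul_le_mul_of_nonneg_left this h3.le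

lemma I0k_continuous (k : ℕ) : Continuous (I0k k) := by
  apply continuous_const.mul
  exact intervalIntegral.continuous_parametric_intervalIntegral_of_continuous'
    (f := fun (z : ℝ) (θ : ℝ) => Real.exp (z * Real.cos θ) * Real.cos θ ^ k)
    (by fun_prop : Continuous fun p : ℝ × ℝ => Real.exp (p.1 * Real.cos p.2) * Real.cos p.2 ^ k) 0 π

lemma I0_neg (x : ℝ) : I0 (-x) = I0 x := by
  rw [I0, I0]
  congr 1
  have h1 : (∫ θ in (0:ℝ)..π, Real.exp (-x * Real.cos θ))
      = ∫ θ in (0:ℝ)..π, (fun t => Real.exp (x * Real.cos t)) (π - θ) := by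
    apply intervalIntegral.integral_congr
    intro θ _
    simp [Real.cos_pi_sub]
  rw [h1, intervalIntegral.integral_comp_sub_left (fun t => Real.exp (x * Real.cos t)) π]
  norm_num

lemma I0_le_rpow (x : ℝ) {y : ℝ} (hy0 : 0 ≤ y) (hy1 : y ≤ 1) :
    I0 (y * x) ≤ Real.exp (y * Real.log (I0 x)) := by
  have hπ := Real.pi_pos
  set c := I0 x with hc
  have hcpos : 0 < c := I0_pos x
  have hkey : ∀ θ : ℝ, Real.exp (y * x * Real.cos θ) * Real.exp ((1 - y) * Real.log c)
      ≤ y * Real.exp (x * Real.cos θ) + (1 - y) * c := by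
    intro θ
    have h := Real.geom_mean_le_arith_mean2_weighted (w₁ := y) (w₂ := 1 - y)
      (p₁ := Real.exp (x * Real.cos θ)) (p₂ := c) hy0 (by linarith)
      (Real.exp_pos (x * Real.cos θ)).le hcpos.le (by ring)
    have e1 : Real.exp (x * Real.cos θ) ^ y = Real.exp (y * x * Real.cos θ) := by
      rw [← Real.exp_mul]; ring_nf
    have e2 : c ^ (1 - y) = Real.exp ((1 - y) * Real.log c) := by
      rw [Real.rpow_def_of_pos hcpos]; ring_nf
    rw [e1, e2] at h
    exact h
  have hint : (∫ θ in (0:ℝ)..π, Real.exp (y * x * Real.cos θ) * Real.exp ((1 - y) * Real.log c))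
      ≤ ∫ θ in (0:ℝ)..π, (y * Real.exp (x * Real.cos θ) + (1 - y) * c) := by
    exact intervalIntegral.integral_mono_on hπ.le
      ((intInt0 (y*x) 0 π).mul_const _)
      (((intInt0 x 0 π).const_mul y).add intervalIntegrable_const)
      (fun θ _ => hkey θ)
  have hL : (∫ θ in (0:ℝ)..π, Real.exp (y * x * Real.cos θ) * Real.exp ((1 - y) * Real.log c))
      = (π * I0 (y * x)) * Real.exp ((1 - y) * Real.log c) := by
    rw [intervalIntegral.integral_mul_const, I0]
    field_simp
  have hR : (∫ θ in (0:ℝ)..π, (y * Real.exp (x * Real.cos θ) + (1 - y) * c)) = π * c := by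
    rw [intervalIntegral.integral_add ((intInt0 x 0 π).const_mul y) intervalIntegrable_const,
      intervalIntegral.integral_const_mul, intervalIntegral.integral_const]
    have : (∫ θ in (0:ℝ)..π, Real.exp (x * Real.cos θ)) = π * c := by
      rw [hc, I0]; field_simp
    rw [this]
    simp [smul_eq_mul]
    try ring
  rw [hL, hR] at hint
  have hsplit : c = Real.exp (y * Real.log c) * Real.exp ((1 - y) * Real.log c) := by
    rw [← Real.exp_add,
      show y * Real.log c + (1 - y) * Real.log c = Real.log c by ring]
    exact (Real.exp_log hcpos).symm
  have hepos : 0 < Real.exp ((1 - y) * Real.log c) := Real.exp_pos _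
  have h7 : π * c = π * (Real.exp (y * Real.log c) * Real.exp ((1 - y) * Real.log c)) := by
    rw [← hsplit]
  rw [h7] at hint
  nlinarith [hint, mul_pos hπ hepos, hepos, hπ]

lemma I0_lower {x : ℝ} (hx : 3 ≤ x) : Real.exp (x / 6) ≤ I0 x := by
  have hπ := Real.pi_pos
  have hπ315 : π < 3.15 := Real.pi_lt_d2
  have h09π : (0.9:ℝ) ≤ π := by linarith [Real.pi_gt_three]
  -- split the integral
  have hsplit : (∫ θ in (0:ℝ)..π, Real.exp (x * Real.cos θ))
      = (∫ θ in (0:ℝ)..(0.9:ℝ), Real.exp (x * Real.cos θ))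
        + ∫ θ in (0.9:ℝ)..π, Real.exp (x * Real.cos θ) :=
    (intervalIntegral.integral_add_adjacent_intervals (intInt0 x 0 0.9) (intInt0 x 0.9 π)).symm
  have htail : (0:ℝ) ≤ ∫ θ in (0.9:ℝ)..π, Real.exp (x * Real.cos θ) :=
    intervalIntegral.integral_nonneg h09π (fun θ _ => (Real.exp_pos _).le)
  have hhead : (0.9:ℝ) * Real.exp (0.595 * x) ≤ ∫ θ in (0:ℝ)..(0.9:ℝ), Real.exp (x * Real.cos θ) := by
    have : (∫ θ in (0:ℝ)..(0.9:ℝ), (Real.exp (0.595 * x)))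
        ≤ ∫ θ in (0:ℝ)..(0.9:ℝ), Real.exp (x * Real.cos θ) := by
      apply intervalIntegral.integral_mono_on (by norm_num) intervalIntegrable_const (intInt0 x 0 0.9)
      intro θ hθ
      apply Real.exp_le_exp.2
      have hcos : (0.595:ℝ) ≤ Real.cos θ := by
        have h1 := Real.one_sub_sq_div_two_le_cos (x := θ)
        have hθ2 : θ ^ 2 ≤ 0.81 := by nlinarith [hθ.1, hθ.2]
        nlinarith
      nlinarith [hcos]
    simpa using this
  have hI : (0.9 / π) * Real.exp (0.595 * x) ≤ I0 x := by
    rw [I0, hsplit]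
    have h1π : (0:ℝ) < 1 / π := by positivity
    calc (0.9 / π) * Real.exp (0.595 * x)
        = (1/π) * (0.9 * Real.exp (0.595 * x) + 0) := by
          rw [add_zero]; ring
      _ ≤ (1/π) * ((∫ θ in (0:ℝ)..(0.9:ℝ), Real.exp (x * Real.cos θ))
            + ∫ θ in (0.9:ℝ)..π, Real.exp (x * Real.cos θ)) := by
          exact mul_le_mul_of_nonneg_left (add_le_add hhead htail) h1π.le
  refine le_trans ?_ hI
  -- need exp(x/6) ≤ (0.9/π) exp(0.595 x), i.e. π/0.9 ≤ exp(0.595x - x/6)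
  have key : π / 0.9 ≤ Real.exp (0.595 * x - x / 6) := by
    have hexp : Real.exp 1.285 ≤ Real.exp (0.595 * x - x / 6) := by
      apply Real.exp_le_exp.2; nlinarith
    refine le_trans ?_ hexp
    have he1 : (2.7182818:ℝ) ≤ Real.exp 1 := by
      have := Real.exp_one_gt_d9; linarith
    have he2 : (1.1425:ℝ) ^ 2 ≤ Real.exp 0.285 := by
      have h := Real.add_one_le_exp (0.1425:ℝ)
      have : ((0.1425:ℝ) + 1) ^ 2 ≤ Real.exp 0.1425 ^ 2 := by
        apply pow_le_pow_left₀ (by norm_num) h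
      calc (1.1425:ℝ)^2 = ((0.1425:ℝ) + 1)^2 := by norm_num
        _ ≤ Real.exp 0.1425 ^ 2 := this
        _ = Real.exp 0.285 := by rw [← Real.exp_nat_mul]; norm_num
    have : (2.7182818:ℝ) * 1.1425 ^ 2 ≤ Real.exp 1 * Real.exp 0.285 := by
      apply mul_le_mul he1 he2 (by norm_num) (Real.exp_pos 1).le
    rw [← Real.exp_add] at this
    have heq : (1:ℝ) + 0.285 = 1.285 := by norm_num
    rw [heq] at this
    have hnum : (3.5:ℝ) ≤ 2.7182818 * 1.1425 ^ 2 := by norm_num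
    have h35 : (3.5:ℝ) ≤ Real.exp 1.285 := le_trans hnum this
    have hpi9 : π / 0.9 ≤ 3.5 := by
      rw [div_le_iff₀ (by norm_num : (0:ℝ) < 0.9)]
      nlinarith [hπ315]
    linarith
  have hx6 : Real.exp (x / 6) * (π / 0.9) ≤ Real.exp (x / 6) * Real.exp (0.595 * x - x / 6) :=
    mul_le_mul_of_nonneg_left key (Real.exp_pos _).le
  rw [← Real.exp_add] at hx6
  have heq2 : x / 6 + (0.595 * x - x / 6) = 0.595 * x := by ring
  rw [heq2] at hx6
  rw [div_mul_eq_mul_div, le_div_iff₀ hπ]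
  have h9 : Real.exp (x / 6) * (π / 0.9) * 0.9 = Real.exp (x / 6) * π := by
    field_simp
  have h10 := mul_le_mul_of_nonneg_right hx6 (by norm_num : (0:ℝ) ≤ 0.9)
  rw [h9] at h10
  linarith

lemma log_I0_ge {x : ℝ} (hx : 3 ≤ |x|) : |x| / 6 ≤ Real.log (I0 x) := by
  have hIx : I0 |x| = I0 x := by
    rcases abs_choice x with h | h
    · rw [h]
    · rw [h, I0_neg]
  have h1 : Real.exp (|x| / 6) ≤ I0 x := by
    rw [← hIx]; exact I0_lower hx
  calc |x| / 6 = Real.log (Real.exp (|x| / 6)) := (Real.log_exp _).symm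
    _ ≤ Real.log (I0 x) := Real.log_le_log (Real.exp_pos _) h1

theorem stmt_3 (x : ℝ) (k : ℕ) :
    (∫ y in (0:ℝ)..1, (I0k k (y * x) / I0 x) ^ 2) ≤ 1 ∧
    |x| * (∫ y in (0:ℝ)..1, (I0k k (y * x) / I0 x) ^ 2) ≤ 3 := by
  have hπ := Real.pi_pos
  set c := I0 x with hc
  have hcpos : 0 < c := I0_pos x
  have hc1 : 1 ≤ c := one_le_I0 x
  have hlogc : 0 ≤ Real.log c := Real.log_nonneg hc1
  set L := Real.log c with hL
  -- pointwise bound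
  have hbound : ∀ y ∈ Set.Icc (0:ℝ) 1,
      (I0k k (y * x) / c) ^ 2 ≤ Real.exp ((2 * y - 2) * L) := by
    intro y hy
    have h1 : |I0k k (y * x)| ≤ Real.exp (y * L) :=
      (abs_I0k_le k (y * x)).trans (I0_le_rpow x hy.1 hy.2)
    have h2 : (I0k k (y * x)) ^ 2 ≤ Real.exp (y * L) ^ 2 := by
      rw [← sq_abs]
      apply pow_le_pow_left₀ (abs_nonneg _) h1
    have h3 : (I0k k (y * x) / c) ^ 2 = (I0k k (y * x)) ^ 2 / c ^ 2 := by rw [div_pow]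
    rw [h3]
    have hcexp : c = Real.exp L := by rw [hL, Real.exp_log hcpos]
    have hc2 : c ^ 2 = Real.exp (2 * L) := by
      rw [hcexp, sq, ← Real.exp_add]; ring_nf
    have h4 : Real.exp (y * L) ^ 2 = Real.exp (2 * (y * L)) := by
      rw [sq, ← Real.exp_add]; ring_nf
    rw [hc2, div_le_iff₀ (Real.exp_pos _)]
    calc (I0k k (y * x)) ^ 2 ≤ Real.exp (y * L) ^ 2 := h2
      _ = Real.exp (2 * (y * L)) := h4
      _ = Real.exp ((2 * y - 2) * L) * Real.exp (2 * L) := by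
          rw [← Real.exp_add]; ring_nf
  have hbound1 : ∀ y ∈ Set.Icc (0:ℝ) 1, (I0k k (y * x) / c) ^ 2 ≤ 1 := by
    intro y hy
    refine (hbound y hy).trans ?_
    calc Real.exp ((2 * y - 2) * L) ≤ Real.exp 0 := by
          apply Real.exp_le_exp.2
          have : 2 * y - 2 ≤ 0 := by linarith [hy.2]
          nlinarith
      _ = 1 := Real.exp_zero
  -- integrability
  have hcont : Continuous fun y : ℝ => (I0k k (y * x) / c) ^ 2 :=
    (((I0k_continuous k).comp (continuous_id.mul continuous_const)).div_const c).pow 2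
  have hintg : IntervalIntegrable (fun y : ℝ => (I0k k (y * x) / c) ^ 2) volume 0 1 :=
    hcont.intervalIntegrable 0 1
  have part1 : (∫ y in (0:ℝ)..1, (I0k k (y * x) / c) ^ 2) ≤ 1 := by
    have : (∫ y in (0:ℝ)..1, (I0k k (y * x) / c) ^ 2) ≤ ∫ _ in (0:ℝ)..1, (1:ℝ) :=
      intervalIntegral.integral_mono_on zero_le_one hintg intervalIntegrable_const hbound1
    simpa using this
  have hnonneg : 0 ≤ ∫ y in (0:ℝ)..1, (I0k k (y * x) / c) ^ 2 :=
    intervalIntegral.integral_nonneg zero_le_one (fun y _ => sq_nonneg _)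
  refine ⟨part1, ?_⟩
  rcases le_or_gt |x| 3 with hx3 | hx3
  · calc |x| * (∫ y in (0:ℝ)..1, (I0k k (y * x) / c) ^ 2)
        ≤ 3 * 1 := mul_le_mul hx3 part1 hnonneg (by norm_num)
      _ = 3 := by norm_num
  · -- large |x|
    have hLge : |x| / 6 ≤ L := log_I0_ge hx3.le
    have hLpos : 0 < L := lt_of_lt_of_le (by linarith) hLge
    have hxpos : 0 < |x| := by linarith
    -- compare with exponential integrand
    have hexp_int : IntervalIntegrable (fun y : ℝ => Real.exp ((2 * y - 2) * L)) volume 0 1 :=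
      (by fun_prop : Continuous fun y : ℝ => Real.exp ((2 * y - 2) * L)).intervalIntegrable 0 1
    have hcmp : (∫ y in (0:ℝ)..1, (I0k k (y * x) / c) ^ 2)
        ≤ ∫ y in (0:ℝ)..1, Real.exp ((2 * y - 2) * L) :=
      intervalIntegral.integral_mono_on zero_le_one hintg hexp_int hbound
    -- evaluate the exponential integral
    have heval : (∫ y in (0:ℝ)..1, Real.exp ((2 * y - 2) * L))
        = Real.exp (-(2 * L)) * ((2 * L)⁻¹ * (Real.exp (2 * L) - 1)) := by
      have hcongr : (fun y : ℝ => Real.exp ((2 * y - 2) * L))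
          = fun y : ℝ => Real.exp (-(2 * L)) * Real.exp (2 * L * y) := by
        funext y
        rw [← Real.exp_add]
        ring_nf
      rw [hcongr, intervalIntegral.integral_const_mul]
      congr 1
      have heq := intervalIntegral.integral_comp_mul_left (fun t => Real.exp t) (c := 2 * L)
        (a := 0) (b := 1) (by positivity : (2:ℝ) * L ≠ 0)
      rw [heq, integral_exp]
      simp [smul_eq_mul]
    have hle : (∫ y in (0:ℝ)..1, Real.exp ((2 * y - 2) * L)) ≤ 1 / (2 * L) := by
      rw [heval]
      have h2 : Real.exp (-(2 * L)) * (Real.exp (2 * L) - 1) = 1 - Real.exp (-(2 * L)) := by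
        rw [mul_sub, ← Real.exp_add]
        norm_num
      have h1 : Real.exp (-(2 * L)) * ((2 * L)⁻¹ * (Real.exp (2 * L) - 1))
          = (1 - Real.exp (-(2 * L))) / (2 * L) := by
        rw [div_eq_mul_inv, ← h2]; ring
      rw [h1]
      apply div_le_div₀ (zero_le_one) _ (by positivity) le_rfl
      linarith [Real.exp_pos (-(2 * L))]
    have hfin : (∫ y in (0:ℝ)..1, (I0k k (y * x) / c) ^ 2) ≤ 3 / |x| := by
      refine (hcmp.trans hle).trans ?_
      rw [div_le_div_iff₀ (by positivity) hxpos]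
      nlinarith [hLge]
    calc |x| * (∫ y in (0:ℝ)..1, (I0k k (y * x) / c) ^ 2)
        ≤ |x| * (3 / |x|) := mul_le_mul_of_nonneg_left hfin hxpos.le
      _ = 3 := by field_simp
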